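/- Let L be a line arrangement (over any field) having at least two modular points of multiplicity 2. Then L is a near pencil. -/

import Mathlib

open Projectivization

/-- The projective plane over `K`, with points (and, dually, lines) given by
projectivizing `K^3`. -/
abbrev PP (K : Type*) [Field K] := Projectivization K (Fin 3 → K)

/-- Incidence: the point `p` lies on the line `l` (given by dual coordinates):
the dot product of (any) homogeneous coordinates vanishes. -/
def incid {K : Type*} [Field K] (p l : PP K) : Prop :=
  dotProduct p.rep l.rep = 0

/-- The multiplicity of a point `p` with respect to a line arrangement `L`:
the number of lines of `L` passing through `p`. -/
noncomputable def mult {K : Type*} [Field K] (L : Set (PP K)) (p : PP K) : ℕ :=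
  {l ∈ L | incid p l}.ncard

/-- `p` is a crossing point of the arrangement `L`. -/
def crossing {K : Type*} [Field K] (L : Set (PP K)) (p : PP K) : Prop :=
  2 ≤ mult L p

/-- `p` is a modular point of `L`: a crossing point such that for every other
crossing point `q`, some line of `L` passes through both `p` and `q`. -/
def modular {K : Type*} [Field K] (L : Set (PP K)) (p : PP K) : Prop :=
  crossing L p ∧ ∀ q, crossing L q → q ≠ p → ∃ l ∈ L, incid p l ∧ incid q l

/-- `t_k`: the number of crossing points of `L` of multiplicity exactly `k`. -/
noncomputable def tk {K : Type*} [Field K] (L : Set (PP K)) (k : ℕ) : ℕ :=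
  {p | mult L p = k}.ncard

/-- A pencil: all lines pass through one common point. -/
def isPencil {K : Type*} [Field K] (L : Set (PP K)) : Prop :=
  ∃ p, ∀ l ∈ L, incid p l

/-- A near pencil: an arrangement of `s ≥ 3` lines, exactly `s - 1` of which
are concurrent. -/
def isNearPencil {K : Type*} [Field K] (L : Set (PP K)) : Prop :=
  3 ≤ L.ncard ∧ ∃ p, {l ∈ L | incid p l}.ncard + 1 = L.ncard

/- Modularity of `q` gives a line `l` through `p` and `q`; let `a` and `b` be the second lines
through the double points `p` and `q`, and `r = a ∩ b`. Any other line `m` of the arrangement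
meets `a` in a crossing point `x ≠ q`, which modularity of `q` joins to `q` by `l` or by `b`.
Joining by `l` would make `x = p`, putting a third line through `p`; hence `x` lies on `b`, so
`x = r` and `m` passes through `r`. Thus all lines except `l` pass through `r ∉ l`. -/

namespace Projectivization

variable {F : Type*} [Field F] [DecidableEq F]

theorem eq_cross_of_orthogonal {v w x : Projectivization F (Fin 3 → F)} (h : v ≠ w)
    (hv : x.orthogonal v) (hw : x.orthogonal w) : x = cross v w := by
  induction v with | h v hv₀ =>
  induction w with | h w hw₀ =>
  induction x with | h x hx₀ =>
  rw [orthogonal_mk hx₀ hv₀] at hv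
  rw [orthogonal_mk hx₀ hw₀] at hw
  rw [cross_mk_of_ne hv₀ hw₀ h, mk_eq_mk_iff_crossProduct_eq_zero,
    cross_cross_eq_smul_sub_smul', hw, dotProduct_comm, hv, zero_smul, zero_smul, sub_zero]

end Projectivization

section Incidence

variable {K : Type*} [Field K]

theorem incid_iff_orthogonal {p l : PP K} : incid p l ↔ p.orthogonal l := by
  have h := orthogonal_mk p.rep_nonzero l.rep_nonzero
  rw [mk_rep, mk_rep] at h
  exact h.symm

theorem exists_incid_incid {l₁ l₂ : PP K} (h : l₁ ≠ l₂) :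
    ∃ x, incid x l₁ ∧ incid x l₂ := by
  classical
  simp only [incid_iff_orthogonal]
  exact ⟨cross l₁ l₂, cross_orthogonal_left h, cross_orthogonal_right h⟩

theorem eq_of_incid_of_incid {l₁ l₂ x y : PP K} (h : l₁ ≠ l₂)
    (hx₁ : incid x l₁) (hx₂ : incid x l₂) (hy₁ : incid y l₁) (hy₂ : incid y l₂) : x = y := by
  classical
  simp only [incid_iff_orthogonal] at *
  rw [eq_cross_of_orthogonal h hx₁ hx₂, eq_cross_of_orthogonal h hy₁ hy₂]

end Incidence

section Arrangement

variable {K : Type*} [Field K] {L : Set (PP K)}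

theorem crossing_of_incid_of_incid (hfin : L.Finite) {m₁ m₂ x : PP K} (h₁ : m₁ ∈ L)
    (h₂ : m₂ ∈ L) (hne : m₁ ≠ m₂) (hx₁ : incid x m₁) (hx₂ : incid x m₂) : crossing L x := by
  have hsub : ({m₁, m₂} : Set (PP K)) ⊆ {l ∈ L | incid x l} := by
    rintro t (rfl | rfl)
    exacts [⟨h₁, hx₁⟩, ⟨h₂, hx₂⟩]
  have := Set.ncard_le_ncard hsub (hfin.subset (Set.sep_subset _ _))
  rwa [Set.ncard_pair hne] at this

theorem exists_other_line_of_mult_eq_two {p l : PP K} (hm : mult L p = 2) (hl : l ∈ L)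
    (hpl : incid p l) :
    ∃ a ∈ L, a ≠ l ∧ incid p a ∧ ∀ n ∈ L, incid p n → n = l ∨ n = a := by
  obtain ⟨x, y, hxy, hP⟩ := Set.ncard_eq_two.mp hm
  have hmem : ∀ n, n ∈ L ∧ incid p n ↔ n = x ∨ n = y := fun n => Set.ext_iff.mp hP n
  rcases (hmem l).mp ⟨hl, hpl⟩ with rfl | rfl
  · obtain ⟨hyL, hpy⟩ := (hmem y).mpr (Or.inr rfl)
    exact ⟨y, hyL, hxy.symm, hpy, fun n hn hpn => (hmem n).mp ⟨hn, hpn⟩⟩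
  · obtain ⟨hxL, hpx⟩ := (hmem x).mpr (Or.inl rfl)
    exact ⟨x, hxL, hxy, hpx, fun n hn hpn => ((hmem n).mp ⟨hn, hpn⟩).symm⟩

/-- Here `p` is the double point `l ∩ a`, `q` the double modular point `l ∩ b`, and `r = a ∩ b`. -/
theorem incid_of_modular_of_double_points (hfin : L.Finite) {l a b m p q r : PP K}
    (hq : modular L q) (hQ : ∀ n ∈ L, incid q n → n = l ∨ n = b)
    (hP : ∀ n ∈ L, incid p n → n = l ∨ n = a) (hpl : incid p l) (hpa : incid p a)
    (haL : a ∈ L) (hal : a ≠ l) (hab : a ≠ b) (hra : incid r a) (hrb : incid r b)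
    (hmL : m ∈ L) (hml : m ≠ l) : incid r m := by
  rcases eq_or_ne m a with rfl | hma
  · exact hra
  obtain ⟨x, hxm, hxa⟩ := exists_incid_incid hma
  have hxq : x ≠ q := by
    rintro rfl
    rcases hQ a haL hxa with h | h
    exacts [hal h, hab h]
  obtain ⟨n, hnL, hqn, hxn⟩ :=
    hq.2 x (crossing_of_incid_of_incid hfin hmL haL hma hxm hxa) hxq
  rcases hQ n hnL hqn with rfl | rfl
  · have hxp : x = p := eq_of_incid_of_incid hal hxa hxn hpa hpl
    subst hxp
    rcases hP m hmL hxm with h | h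
    exacts [absurd h hml, absurd h hma]
  · rwa [← eq_of_incid_of_incid hab hxa hxn hra hrb]

theorem isNearPencil_of_forall_ne_incid (hfin : L.Finite) (h3 : 3 ≤ L.ncard) {l r : PP K}
    (hl : l ∈ L) (hrl : ¬ incid r l) (h : ∀ m ∈ L, m ≠ l → incid r m) : isNearPencil L := by
  have hlines : {m ∈ L | incid r m} = L \ {l} := by
    ext m
    exact ⟨fun ⟨hm, hrm⟩ => ⟨hm, by rintro rfl; exact hrl hrm⟩,
      fun ⟨hm, hml⟩ => ⟨hm, h m hm hml⟩⟩
  exact ⟨h3, r, by rw [hlines, Set.ncard_sdiff_singleton_add_one hl hfin]⟩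

end Arrangement

theorem near_pencil_of_two_double_modular_points_general {K : Type*} [Field K] (L : Set (PP K))
    (hfin : L.Finite) (p q : PP K) (hpq : p ≠ q)
    (hpm : mult L p = 2)
    (hq : modular L q) (hqm : mult L q = 2) :
    isNearPencil L := by
  obtain ⟨l, hlL, hql, hpl⟩ := hq.2 p hpm.ge hpq
  obtain ⟨a, haL, hal, hpa, hP⟩ := exists_other_line_of_mult_eq_two hpm hlL hpl
  obtain ⟨b, hbL, hbl, hqb, hQ⟩ := exists_other_line_of_mult_eq_two hqm hlL hql
  have hab : a ≠ b := by
    rintro rfl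
    exact hpq (eq_of_incid_of_incid hal hpa hpl hqb hql)
  obtain ⟨r, hra, hrb⟩ := exists_incid_incid hab
  have hrl : ¬ incid r l := by
    intro hrl
    obtain rfl : r = p := eq_of_incid_of_incid hal hra hrl hpa hpl
    rcases hP b hbL hrb with h | h
    exacts [hbl h, hab h.symm]
  have h3 : 3 ≤ L.ncard := by
    have hlab : ({l, a, b} : Set (PP K)).ncard = 3 :=
      Set.ncard_eq_three.mpr ⟨l, a, b, hal.symm, hbl.symm, hab, rfl⟩
    exact hlab ▸ Set.ncard_le_ncard (by simp [Set.insert_subset_iff, hlL, haL, hbL]) hfin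
  exact isNearPencil_of_forall_ne_incid hfin h3 hlL hrl fun m hmL hml =>
    incid_of_modular_of_double_points hfin hq hQ hP hpl hpa haL hal hab hra hrb hmL hml

/-- if L has at least two modular points of multiplicity 2, then L
is a near pencil. -/
theorem near_pencil_of_two_double_modular_points {K : Type*} [Field K] (L : Set (PP K))
    (hfin : L.Finite) (hs : 2 ≤ L.ncard) (p q : PP K) (hpq : p ≠ q)
    (hp : modular L p) (hpm : mult L p = 2)
    (hq : modular L q) (hqm : mult L q = 2) :
    isNearPencil L :=
  near_pencil_of_two_double_modular_points_general L hfin p q hpq hpm hq hqm
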